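/- arXiv:1805.12179 — 3 statements merged into one kernel-verified Lean document; each statement's English description precedes it below -/
import Mathlib

section
/- Let X_1,…,X_n be i.i.d. S-valued random variables with symmetric measurable kernel φ satisfying E[φ(X_1,X_2)^2] < ∞, and let {G_1,G_2} be any partition of {1,…,n} with 2 ≤ n_1 ≤ n−2. Then B_n is first-order degenerate under this null model: for every k ∈ {1,…,n}, the conditional expectation satisfies E[B_n | X_k] = 0 almost surely. -/
open MeasureTheory ProbabilityTheory Finset

/-- Within-group U-statistic `U^{(g)} = C(n_g,2)⁻¹ ∑_{i<j, i,j ∈ G} φ(x i, x j)`. -/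
noncomputable def Uwithin {S : Type*} (φ : S → S → ℝ) (x : ℕ → S) (G : Finset ℕ) : ℝ :=
  ((G.card.choose 2 : ℕ) : ℝ)⁻¹ *
    ∑ i ∈ G, ∑ j ∈ G.filter (fun j => i < j), φ (x i) (x j)

/-- Between-group U-statistic `U^{(1,2)} = (n₁ n₂)⁻¹ ∑_{i ∈ G₁} ∑_{j ∈ G₂} φ(x i, x j)`. -/
noncomputable def Ubetween {S : Type*} (φ : S → S → ℝ) (x : ℕ → S) (G1 G2 : Finset ℕ) : ℝ :=
  ((G1.card : ℝ) * (G2.card : ℝ))⁻¹ * ∑ i ∈ G1, ∑ j ∈ G2, φ (x i) (x j)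

/-- `B_n = (n₁ n₂ / (n(n-1))) (2U^{(1,2)} - U^{(1)} - U^{(2)})` where `n = n₁ + n₂`. -/
noncomputable def BnPart {S : Type*} (φ : S → S → ℝ) (x : ℕ → S) (G1 G2 : Finset ℕ) : ℝ :=
  ((G1.card : ℝ) * (G2.card : ℝ)) /
      (((G1.card + G2.card : ℕ) : ℝ) * (((G1.card + G2.card : ℕ) : ℝ) - 1)) *
    (2 * Ubetween φ x G1 G2 - Uwithin φ x G1 - Uwithin φ x G2)

/-!
Under the null model, `E[φ(X_i, X_j) | X_k]` is the constant `θ = E φ(X₁, X₂)` when `k ∉ {i, j}`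
(independence) and the same function `φ₁(X_k)` for every pair through `k` (all pairs `(X_k, X_j)`
have the same law). Since `B_n` is linear in the kernel, `E[B_n | X_k]` is `B_n` evaluated at
this kernel, and that vanishes: the constant part gives `θ (2 - 1 - 1)`, and for `k ∈ G₁` the
part through `k` contributes `2 · n₂ / (n₁ n₂)` to `2 U^{(1,2)}`, `(n₁ - 1) / C(n₁, 2) = 2 / n₁`
to `U^{(1)}` and nothing to `U^{(2)}`.
-/

lemma Finset.sum_ite_eq_add_card_sub_one_mul {ι R : Type*} [DecidableEq ι] [Ring R]
    {s : Finset ι} {k : ι} (hk : k ∈ s) (a b : R) :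
    ∑ i ∈ s, (if i = k then a else b) = a + (#s - 1 : R) * b := by
  rw [← add_sum_erase s _ hk, if_pos rfl,
    sum_congr rfl fun i hi => if_neg (ne_of_mem_erase hi), sum_const, nsmul_eq_mul,
    cast_card_erase_of_mem hk]

lemma Finset.sum_sum_erase_eq_two_nsmul_sum_lt {ι M : Type*} [LinearOrder ι] [AddCommMonoid M]
    (s : Finset ι) {f : ι → ι → M} (hf : ∀ i j, f i j = f j i) :
    ∑ i ∈ s, ∑ j ∈ s.erase i, f i j = 2 • ∑ i ∈ s, ∑ j ∈ s with i < j, f i j := by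
  have hsplit : ∀ i ∈ s, ∑ j ∈ s.erase i, f i j
      = ∑ j ∈ s with i < j, f i j + ∑ j ∈ s with j < i, f i j := fun i _ => by
    rw [← sum_filter_add_sum_filter_not (s.erase i) (fun j => i < j)]
    congr 2 <;> ext j <;> simp only [mem_filter, mem_erase] <;> grind
  have hswap : ∑ i ∈ s, ∑ j ∈ s with j < i, f i j = ∑ i ∈ s, ∑ j ∈ s with i < j, f i j := by
    simp only [sum_filter]
    rw [sum_comm]
    simp only [hf]
  rw [sum_congr rfl hsplit, sum_add_distrib, hswap, two_nsmul]

lemma Uwithin_eq_sum_erase {S : Type*} {φ : S → S → ℝ} (hφ : ∀ a b, φ a b = φ b a)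
    (x : ℕ → S) (G : Finset ℕ) :
    Uwithin φ x G = (#G * (#G - 1 : ℝ))⁻¹ * ∑ i ∈ G, ∑ j ∈ G.erase i, φ (x i) (x j) := by
  rw [Uwithin, G.sum_sum_erase_eq_two_nsmul_sum_lt (fun i j => hφ (x i) (x j)),
    Nat.cast_choose_two, nsmul_eq_mul, div_eq_mul_inv, mul_inv, inv_inv]
  ring

lemma BnPart_comm {S : Type*} {φ : S → S → ℝ} (hφ : ∀ a b, φ a b = φ b a)
    (x : ℕ → S) (G1 G2 : Finset ℕ) : BnPart φ x G1 G2 = BnPart φ x G2 G1 := by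
  have hsum : ∑ i ∈ G2, ∑ j ∈ G1, φ (x i) (x j) = ∑ i ∈ G1, ∑ j ∈ G2, φ (x i) (x j) := by
    rw [sum_comm]
    simp only [hφ]
  rw [BnPart, BnPart, Ubetween, Ubetween, hsum, Nat.add_comm]
  ring

/-- The conditional expectation of `φ(X_i, X_j)` given `X_k` under the null model: `t` stands
for the first Hoeffding projection `φ₁(X_k)` on the pairs through `k`, `c` for `θ = E φ(X₁, X₂)`
on all other pairs. -/
def starKernel {ι : Type*} [DecidableEq ι] (k : ι) (t c : ℝ) (i j : ι) : ℝ :=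
  if i = k ∨ j = k then t else c

lemma starKernel_comm {ι : Type*} [DecidableEq ι] (k : ι) (t c : ℝ) (i j : ι) :
    starKernel k t c i j = starKernel k t c j i := by
  simp only [starKernel, or_comm]

section starKernel

variable {k : ℕ} {t c : ℝ}

lemma sum_sum_erase_starKernel_of_notMem {G : Finset ℕ} (hk : k ∉ G) :
    ∑ i ∈ G, ∑ j ∈ G.erase i, starKernel k t c i j = #G * ((#G - 1) * c) := by
  have hc : ∀ i ∈ G, ∀ j ∈ G.erase i, starKernel k t c i j = c := fun i hi j hj => by
    rw [starKernel, if_neg]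
    rintro (rfl | rfl)
    exacts [hk hi, hk (mem_of_mem_erase hj)]
  rw [sum_congr rfl fun i hi => sum_congr rfl (hc i hi)]
  simp only [sum_const, nsmul_eq_mul]
  rw [sum_congr rfl fun i hi => by rw [cast_card_erase_of_mem hi], sum_const, nsmul_eq_mul]

lemma sum_sum_erase_starKernel_of_mem {G : Finset ℕ} (hk : k ∈ G) :
    ∑ i ∈ G, ∑ j ∈ G.erase i, starKernel k t c i j
      = (#G - 1) * t + (#G - 1) * (t + (#G - 2) * c) := by
  have hrow : ∀ i ∈ G, ∑ j ∈ G.erase i, starKernel k t c i j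
      = if i = k then (#G - 1) * t else t + (#G - 2) * c := fun i hi => by
    split_ifs with hik
    · subst hik
      simp only [starKernel, true_or, if_true, sum_const, nsmul_eq_mul, cast_card_erase_of_mem hi]
    · have hk' : k ∈ G.erase i := mem_erase.mpr ⟨Ne.symm hik, hk⟩
      simp only [starKernel, hik, false_or]
      rw [sum_ite_eq_add_card_sub_one_mul hk', cast_card_erase_of_mem hi]
      ring
  rw [sum_congr rfl hrow, sum_ite_eq_add_card_sub_one_mul hk]

lemma sum_sum_starKernel_of_mem_of_notMem {G1 G2 : Finset ℕ} (hk1 : k ∈ G1) (hk2 : k ∉ G2) :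
    ∑ i ∈ G1, ∑ j ∈ G2, starKernel k t c i j = #G2 * t + (#G1 - 1) * (#G2 * c) := by
  have hrow : ∀ i ∈ G1, ∑ j ∈ G2, starKernel k t c i j
      = if i = k then #G2 * t else #G2 * c := fun i _ => by
    have hj : ∀ j ∈ G2, starKernel k t c i j = if i = k then t else c := fun j hj => by
      have hjk : j ≠ k := fun h => hk2 (h ▸ hj)
      simp only [starKernel, hjk, or_false]
    rw [sum_congr rfl hj, sum_const, nsmul_eq_mul]
    split_ifs <;> rfl
  rw [sum_congr rfl hrow, sum_ite_eq_add_card_sub_one_mul hk1]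

lemma BnPart_starKernel_of_mem {G1 G2 : Finset ℕ} (hdisj : Disjoint G1 G2) (hk : k ∈ G1)
    (h1 : 2 ≤ #G1) (h2 : 2 ≤ #G2) : BnPart (starKernel k t c) id G1 G2 = 0 := by
  have hk2 : k ∉ G2 := disjoint_left.mp hdisj hk
  have h1' : (2 : ℝ) ≤ #G1 := by exact_mod_cast h1
  have h2' : (2 : ℝ) ≤ #G2 := by exact_mod_cast h2
  rw [BnPart, Ubetween, Uwithin_eq_sum_erase (starKernel_comm k t c),
    Uwithin_eq_sum_erase (starKernel_comm k t c)]
  simp only [id]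
  rw [sum_sum_starKernel_of_mem_of_notMem hk hk2, sum_sum_erase_starKernel_of_mem hk,
    sum_sum_erase_starKernel_of_notMem hk2]
  have : (#G1 : ℝ) - 1 ≠ 0 := by linarith
  have : (#G2 : ℝ) - 1 ≠ 0 := by linarith
  field_simp
  ring

lemma BnPart_starKernel {G1 G2 : Finset ℕ} (hdisj : Disjoint G1 G2) (hk : k ∈ G1 ∪ G2)
    (h1 : 2 ≤ #G1) (h2 : 2 ≤ #G2) : BnPart (starKernel k t c) id G1 G2 = 0 := by
  rcases mem_union.mp hk with hk | hk
  · exact BnPart_starKernel_of_mem hdisj hk h1 h2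
  · rw [BnPart_comm (starKernel_comm k t c)]
    exact BnPart_starKernel_of_mem hdisj.symm hk h2 h1

end starKernel

section condExp

variable {Ω : Type*} {m m₀ : MeasurableSpace Ω} {μ : Measure Ω}

lemma condExp_sum_sum_ae_eq {ι κ : Type*} {s : Finset ι} {t : ι → Finset κ}
    {f g : ι → κ → Ω → ℝ} (hf : ∀ i ∈ s, ∀ j ∈ t i, Integrable (f i j) μ)
    (hg : ∀ i ∈ s, ∀ j ∈ t i, μ[f i j | m] =ᵐ[μ] g i j) :
    μ[fun ω => ∑ i ∈ s, ∑ j ∈ t i, f i j ω | m]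
      =ᵐ[μ] fun ω => ∑ i ∈ s, ∑ j ∈ t i, g i j ω := by
  have hsigma : ∀ h : ι → κ → Ω → ℝ,
      (fun ω => ∑ i ∈ s, ∑ j ∈ t i, h i j ω) = ∑ p ∈ s.sigma t, h p.1 p.2 := fun h => by
    ext ω
    rw [Finset.sum_apply, sum_sigma]
  rw [hsigma, hsigma]
  exact (condExp_finsetSum (fun p hp => hf _ (mem_sigma.mp hp).1 _ (mem_sigma.mp hp).2) m).trans
    (eventuallyEq_sum fun p hp => hg _ (mem_sigma.mp hp).1 _ (mem_sigma.mp hp).2)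

lemma condExp_BnPart_ae_eq {G1 G2 : Finset ℕ} (hdisj : Disjoint G1 G2)
    {f g : ℕ → ℕ → Ω → ℝ}
    (hf : ∀ i ∈ G1 ∪ G2, ∀ j ∈ G1 ∪ G2, i ≠ j → Integrable (f i j) μ)
    (hg : ∀ i ∈ G1 ∪ G2, ∀ j ∈ G1 ∪ G2, i ≠ j → μ[f i j | m] =ᵐ[μ] g i j) :
    μ[fun ω => BnPart (fun i j => f i j ω) id G1 G2 | m]
      =ᵐ[μ] fun ω => BnPart (fun i j => g i j ω) id G1 G2 := by
  set A : ℝ := (#G1 * #G2 : ℝ) / (((#G1 + #G2 : ℕ) : ℝ) * (((#G1 + #G2 : ℕ) : ℝ) - 1))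
  have hform : ∀ h : ℕ → ℕ → Ω → ℝ, (fun ω => BnPart (fun i j => h i j ω) id G1 G2)
      = (A * 2 * ((#G1 : ℝ) * #G2)⁻¹) • (fun ω => ∑ i ∈ G1, ∑ j ∈ G2, h i j ω)
        - (A * (((#G1).choose 2 : ℕ) : ℝ)⁻¹)
          • (fun ω => ∑ i ∈ G1, ∑ j ∈ G1 with i < j, h i j ω)
        - (A * (((#G2).choose 2 : ℕ) : ℝ)⁻¹)
          • (fun ω => ∑ i ∈ G2, ∑ j ∈ G2 with i < j, h i j ω) :=
    fun h => by
      ext ω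
      simp only [BnPart, Ubetween, Uwithin, id, Pi.sub_apply, Pi.smul_apply, smul_eq_mul]
      ring
  have hbetween : ∀ i ∈ G1, ∀ j ∈ G2, i ∈ G1 ∪ G2 ∧ j ∈ G1 ∪ G2 ∧ i ≠ j := fun i hi j hj =>
    ⟨mem_union_left _ hi, mem_union_right _ hj, fun h => disjoint_left.mp hdisj hi (h ▸ hj)⟩
  have hwithin : ∀ G ⊆ G1 ∪ G2, ∀ i ∈ G, ∀ j ∈ G.filter (i < ·),
      i ∈ G1 ∪ G2 ∧ j ∈ G1 ∪ G2 ∧ i ≠ j := fun G hG i hi j hj =>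
    ⟨hG hi, hG (mem_filter.mp hj).1, (mem_filter.mp hj).2.ne⟩
  have hint : ∀ (s : Finset ℕ) (t : ℕ → Finset ℕ),
      (∀ i ∈ s, ∀ j ∈ t i, i ∈ G1 ∪ G2 ∧ j ∈ G1 ∪ G2 ∧ i ≠ j) →
      Integrable (fun ω => ∑ i ∈ s, ∑ j ∈ t i, f i j ω) μ ∧
        μ[fun ω => ∑ i ∈ s, ∑ j ∈ t i, f i j ω | m]
          =ᵐ[μ] fun ω => ∑ i ∈ s, ∑ j ∈ t i, g i j ω := fun s t hst => by
    have hf' : ∀ i ∈ s, ∀ j ∈ t i, Integrable (f i j) μ := fun i hi j hj =>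
      hf i (hst i hi j hj).1 j (hst i hi j hj).2.1 (hst i hi j hj).2.2
    refine ⟨integrable_finsetSum _ fun i hi => integrable_finsetSum _ (hf' i hi),
      condExp_sum_sum_ae_eq hf' fun i hi j hj => ?_⟩
    exact hg i (hst i hi j hj).1 j (hst i hi j hj).2.1 (hst i hi j hj).2.2
  obtain ⟨h12i, h12⟩ := hint G1 (fun _ => G2) hbetween
  obtain ⟨h1i, h1⟩ := hint G1 (fun i => G1.filter (i < ·)) (hwithin G1 subset_union_left)
  obtain ⟨h2i, h2⟩ := hint G2 (fun i => G2.filter (i < ·)) (hwithin G2 subset_union_right)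
  rw [hform, hform]
  refine (condExp_sub ((h12i.smul _).sub (h1i.smul _)) (h2i.smul _) m).trans ?_
  refine (((condExp_sub (h12i.smul _) (h1i.smul _) m).trans ?_).sub
    ((condExp_smul _ _ m).trans (h2.const_smul _)))
  exact ((condExp_smul _ _ m).trans (h12.const_smul _)).sub
    ((condExp_smul _ _ m).trans (h1.const_smul _))

end condExp

section iid

variable {Ω S ι : Type*} [MeasurableSpace Ω] [mS : MeasurableSpace S] {μ : Measure Ω}
  [IsFiniteMeasure μ]

lemma ProbabilityTheory.iIndepFun.identDistrib_pair {X : ι → Ω → S} (hind : iIndepFun X μ)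
    (hid : ∀ i j, IdentDistrib (X i) (X j) μ μ) {i j i' j' : ι} (hij : i ≠ j) (hij' : i' ≠ j') :
    IdentDistrib (fun ω => (X i ω, X j ω)) (fun ω => (X i' ω, X j' ω)) μ μ :=
  (hid i i').prodMk (hid j j') (hind.indepFun hij) (hind.indepFun hij')

lemma condExp_comp_prodMk_ae_eq_of_identDistrib {T : Type*} [MeasurableSpace T] {Y : Ω → S}
    {Z Z' : Ω → T} {f : S × T → ℝ} (hY : Measurable Y) (hf : Measurable f)
    (hid : IdentDistrib (fun ω => (Y ω, Z ω)) (fun ω => (Y ω, Z' ω)) μ μ)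
    (hint : Integrable (fun ω => f (Y ω, Z ω)) μ) :
    μ[fun ω => f (Y ω, Z ω) | mS.comap Y] =ᵐ[μ] μ[fun ω => f (Y ω, Z' ω) | mS.comap Y] := by
  have hint' : Integrable (fun ω => f (Y ω, Z' ω)) μ := (hid.comp hf).integrable_iff.mp hint
  have hsetIntegral : ∀ (W : Ω → T) {A : Set S}, MeasurableSet A →
      ∫ ω in Y ⁻¹' A, f (Y ω, W ω) ∂μ = ∫ ω, (A ×ˢ Set.univ).indicator f (Y ω, W ω) ∂μ :=
    fun W A hA => by
      rw [← integral_indicator (hY hA)]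
      congr 1 with ω
      by_cases hω : Y ω ∈ A <;> simp [hω]
  refine (ae_eq_condExp_of_forall_setIntegral_eq hY.comap_le hint'
    (fun s _ _ => integrable_condExp.integrableOn) ?_
    stronglyMeasurable_condExp.aestronglyMeasurable)
  rintro _ ⟨A, hA, rfl⟩ -
  rw [setIntegral_condExp hY.comap_le hint ⟨A, hA, rfl⟩, hsetIntegral _ hA, hsetIntegral _ hA]
  exact (hid.comp (hf.indicator (hA.prod .univ))).integral_eq

theorem condExp_ae_eq_starKernel [DecidableEq ι] {X : ι → Ω → S} {φ : S → S → ℝ}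
    (hφ : Measurable (Function.uncurry φ)) (hφs : ∀ a b, φ a b = φ b a)
    (hX : ∀ i, Measurable (X i)) (hind : iIndepFun X μ)
    (hid : ∀ i j, IdentDistrib (X i) (X j) μ μ) {k j₀ : ι} (hj₀k : j₀ ≠ k)
    (hint : Integrable (fun ω => φ (X k ω) (X j₀ ω)) μ) {i j : ι} (hij : i ≠ j) :
    μ[fun ω => φ (X i ω) (X j ω) | mS.comap (X k)]
      =ᵐ[μ] fun ω => starKernel k (μ[fun ω => φ (X k ω) (X j₀ ω) | mS.comap (X k)] ω)
        (∫ ω, φ (X k ω) (X j₀ ω) ∂μ) i j := by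
  -- `E[φ(X_k, X_j) | X_k]` depends only on the law of `(X_k, X_j)`, the same for all `j ≠ k`.
  have hpinned : ∀ j ≠ k, μ[fun ω => φ (X k ω) (X j ω) | mS.comap (X k)]
      =ᵐ[μ] μ[fun ω => φ (X k ω) (X j₀ ω) | mS.comap (X k)] := fun j hjk =>
    (condExp_comp_prodMk_ae_eq_of_identDistrib (f := Function.uncurry φ) (hX k) hφ
      (hind.identDistrib_pair hid hj₀k.symm hjk.symm) hint).symm
  by_cases hik : i = k
  · subst hik
    simpa only [starKernel, true_or, if_true] using hpinned j (Ne.symm hij)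
  by_cases hjk : j = k
  · subst hjk
    simp only [starKernel, or_true, if_true]
    simpa only [hφs (X i _)] using hpinned i hik
  simp only [starKernel, hik, hjk, or_self, if_false]
  have hindp := (IndepFun_iff_Indep _ _ μ).mp (hind.indepFun_prodMk hX i j k hik hjk)
  refine (condExp_indep_eq ((hX i).prodMk (hX j)).comap_le (hX k).comap_le
    (hφ.comp (comap_measurable _)).stronglyMeasurable hindp).trans ?_
  rw [((hind.identDistrib_pair hid hij hj₀k.symm).comp hφ).integral_eq]
  rfl

end iid

/-- for i.i.d. `X 0, …, X (n-1)` and any partition `{G₁, G₂}` of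
`{0,…,n-1}` with `2 ≤ n₁ ≤ n-2`, `B_n` is first-order degenerate under the null
model: for every `k < n`, `E[B_n | X_k] = 0` almost surely. -/
theorem BnPart_first_order_degenerate {Ω S : Type*} [MeasurableSpace Ω]
    [mS : MeasurableSpace S] (μ : Measure Ω) [IsProbabilityMeasure μ]
    (φ : S → S → ℝ) (hφm : Measurable (Function.uncurry φ))
    (hφs : ∀ a b, φ a b = φ b a)
    (n n1 n2 : ℕ) (X : ℕ → Ω → S) (hXm : ∀ i, Measurable (X i))
    (hindep : iIndepFun (fun i : Fin n => X i.1) μ)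
    (hident : ∀ i < n, IdentDistrib (X i) (X 0) μ μ)
    (hL2 : Integrable (fun ω => (φ (X 0 ω) (X 1 ω)) ^ 2) μ)
    (G1 G2 : Finset ℕ) (hdisj : Disjoint G1 G2) (hunion : G1 ∪ G2 = Finset.range n)
    (hn1 : G1.card = n1) (hn2 : G2.card = n2)
    (h1 : 2 ≤ n1) (h1' : n1 ≤ n - 2) (hn : n = n1 + n2) :
    ∀ k < n,
      μ[(fun ω => BnPart φ (fun i => X i ω) G1 G2) | MeasurableSpace.comap (X k) mS]
        =ᵐ[μ] 0 := by
  intro k hk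
  have hmem : ∀ i ∈ G1 ∪ G2, i < n := fun i hi => mem_range.mp (hunion ▸ hi)
  have hid : ∀ i j : Fin n, IdentDistrib (X i) (X j) μ μ := fun i j =>
    (hident i i.2).trans (hident j j.2).symm
  have hint01 : Integrable (fun ω => φ (X 0 ω) (X 1 ω)) μ :=
    ((memLp_two_iff_integrable_sq
      (hφm.comp ((hXm 0).prodMk (hXm 1))).aestronglyMeasurable).mpr hL2).integrable one_le_two
  have hint : ∀ i j : Fin n, i ≠ j → Integrable (fun ω => φ (X i ω) (X j ω)) μ := fun i j hij =>
    ((hindep.identDistrib_pair hid (i' := ⟨0, by omega⟩) (j' := ⟨1, by omega⟩) hij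
      (by simp)).comp hφm).integrable_iff.mpr hint01
  obtain ⟨j₀, hj₀k⟩ : ∃ j₀ : Fin n, j₀ ≠ ⟨k, hk⟩ :=
    ⟨⟨if k = 0 then 1 else 0, by split <;> omega⟩, by
      simp only [ne_eq, Fin.ext_iff]
      split <;> omega⟩
  refine (condExp_BnPart_ae_eq hdisj (f := fun i j ω => φ (X i ω) (X j ω))
    (g := fun i j ω => starKernel k (μ[fun ω => φ (X k ω) (X j₀ ω) | mS.comap (X k)] ω)
      (∫ ω, φ (X k ω) (X j₀ ω) ∂μ) i j)
    (fun i hi j hj hij => hint ⟨i, hmem i hi⟩ ⟨j, hmem j hj⟩ (by simpa [Fin.ext_iff]))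
    (fun i hi j hj hij => ?_)).trans
    (Filter.Eventually.of_forall fun ω => BnPart_starKernel hdisj (hunion ▸ mem_range.mpr hk)
      (hn1 ▸ h1) (by omega))
  simpa only [starKernel, Fin.ext_iff] using condExp_ae_eq_starKernel hφm hφs
    (fun i : Fin n => hXm i) hindep hid hj₀k (hint _ _ hj₀k.symm)
    (i := ⟨i, hmem i hi⟩) (j := ⟨j, hmem j hj⟩) (by simpa [Fin.ext_iff])
end

section
/- Let X_1, X_2, … be i.i.d. S-valued random variables with symmetric measurable kernel φ satisfying E[φ(X_1,X_2)^2] < ∞, and for each n ≥ 3 let B_n be the singleton-group statistic computed from X_1,…,X_n with G_1 = {X_1}. Then n^2 · Var(B_n) → σ_1^2 as n → ∞, where σ_1^2 = Var(φ_1(X_1)). -/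
open MeasureTheory ProbabilityTheory Finset Filter

/-- Between-group U-statistic for the singleton group `G₁ = {x 0}`. -/
noncomputable def U12 {S : Type*} (φ : S → S → ℝ) (n : ℕ) (x : ℕ → S) : ℝ :=
  ((n : ℝ) - 1)⁻¹ * ∑ j ∈ Finset.Ico 1 n, φ (x 0) (x j)

/-- Within-group U-statistic for the group `G₂ = {x 1, …, x (n-1)}`. -/
noncomputable def U2 {S : Type*} (φ : S → S → ℝ) (n : ℕ) (x : ℕ → S) : ℝ :=
  (((n - 1).choose 2 : ℕ) : ℝ)⁻¹ *
    ∑ i ∈ Finset.Ico 1 n, ∑ j ∈ Finset.Ico (i + 1) n, φ (x i) (x j)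

/-- The singleton-group statistic `B_n = (1/n) (U^{(1,2)} - U^{(2)})`. -/
noncomputable def Bn1 {S : Type*} (φ : S → S → ℝ) (n : ℕ) (x : ℕ → S) : ℝ :=
  (n : ℝ)⁻¹ * (U12 φ n x - U2 φ n x)

/-!
Since `B_n = (U^{(1,2)} - U^{(2)}) / n`, we have `n² Var(B_n) = Var(U^{(1,2)} - U^{(2)})`.
The `n - 1` summands `φ(X₁, X_j)` of `U^{(1,2)}` all have variance `Var φ(X₁, X₂)`, and two
distinct ones share exactly the argument `X₁`, so by Fubini their covariance is `Var φ₁(X₁) = σ₁²`;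
hence `Var U^{(1,2)} = σ₁² + O(1/n)`. In `U^{(2)}` two summands are correlated only if their index
pairs meet, which happens for `O(n³)` of the `O(n⁴)` pairs of summands, so `Var U^{(2)} = O(1/n)`.
By Cauchy–Schwarz the covariance of `U^{(1,2)}` and `U^{(2)}` tends to `0`, whence the limit `σ₁²`.
-/

open Topology

section Covariance

variable {Ω : Type*} [MeasurableSpace Ω] {μ : Measure Ω} [IsFiniteMeasure μ]

lemma sq_covariance_le_variance_mul_variance {X Y : Ω → ℝ} (hX : MemLp X 2 μ) (hY : MemLp Y 2 μ) :
    cov[X, Y; μ] ^ 2 ≤ Var[X; μ] * Var[Y; μ] := by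
  -- `t ↦ Var[t • X + Y]` is a nonnegative quadratic, so its discriminant is nonpositive
  have h := discrim_le_zero (a := Var[X; μ]) (b := 2 * cov[X, Y; μ]) (c := Var[Y; μ]) fun t => by
    have := variance_nonneg (t • X + Y) μ
    rw [variance_add (hX.const_smul t) hY, variance_smul, covariance_smul_left] at this
    linarith
  rw [discrim] at h
  linarith

lemma abs_covariance_le_sqrt {X Y : Ω → ℝ} (hX : MemLp X 2 μ) (hY : MemLp Y 2 μ) :
    |cov[X, Y; μ]| ≤ √(Var[X; μ] * Var[Y; μ]) :=
  Real.abs_le_sqrt (sq_covariance_le_variance_mul_variance hX hY)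

lemma tendsto_variance_sub_of_tendsto_variance_zero {ι : Type*} {l : Filter ι}
    {A B : ι → Ω → ℝ} (hA : ∀ i, MemLp (A i) 2 μ) (hB : ∀ i, MemLp (B i) 2 μ) {σ : ℝ}
    (hVA : Tendsto (fun i => Var[A i; μ]) l (𝓝 σ)) (hVB : Tendsto (fun i => Var[B i; μ]) l (𝓝 0)) :
    Tendsto (fun i => Var[fun ω => A i ω - B i ω; μ]) l (𝓝 σ) := by
  have hcov : Tendsto (fun i => cov[A i, B i; μ]) l (𝓝 0) := by
    refine squeeze_zero_norm (fun i => abs_covariance_le_sqrt (hA i) (hB i)) ?_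
    simpa using (hVA.mul hVB).sqrt
  simp_rw [variance_fun_sub (hA _) (hB _)]
  simpa using (hVA.sub (hcov.const_mul 2)).add hVB

end Covariance

section ProductKernel

variable {S : Type*} [MeasurableSpace S] {ν : Measure S} [IsProbabilityMeasure ν] {φ : S → S → ℝ}

lemma covariance_kernel_shared_eq_variance_integral (hφm : Measurable (Function.uncurry φ))
    (hφ : MemLp (Function.uncurry φ) 2 (ν.prod ν)) :
    cov[fun q : S × S × S => φ q.1 q.2.1, fun q => φ q.1 q.2.2; ν.prod (ν.prod ν)]
      = Var[fun x => ∫ y, φ x y ∂ν; ν] := by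
  set θ := ∫ p, Function.uncurry φ p ∂(ν.prod ν)
  have h₁ : MeasurePreserving (fun q : S × S × S => (q.1, q.2.1)) (ν.prod (ν.prod ν)) (ν.prod ν) :=
    (MeasurePreserving.id ν).prod measurePreserving_fst
  have h₂ : MeasurePreserving (fun q : S × S × S => (q.1, q.2.2)) (ν.prod (ν.prod ν)) (ν.prod ν) :=
    (MeasurePreserving.id ν).prod measurePreserving_snd
  have hmean : ∀ {g : S × S × S → S × S}, MeasurePreserving g (ν.prod (ν.prod ν)) (ν.prod ν) →
      ∫ q, Function.uncurry φ (g q) ∂(ν.prod (ν.prod ν)) = θ := fun hg => by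
    rw [← integral_map hg.measurable.aemeasurable (hφm.aestronglyMeasurable), hg.map_eq]
  have hmean₁ : ∫ q : S × S × S, φ q.1 q.2.1 ∂(ν.prod (ν.prod ν)) = θ := hmean h₁
  have hmean₂ : ∫ q : S × S × S, φ q.1 q.2.2 ∂(ν.prod (ν.prod ν)) = θ := hmean h₂
  have hint : Integrable (fun q : S × S × S => (φ q.1 q.2.1 - θ) * (φ q.1 q.2.2 - θ))
      (ν.prod (ν.prod ν)) :=
    ((hφ.comp_measurePreserving h₁).sub (memLp_const θ)).integrable_mul
      ((hφ.comp_measurePreserving h₂).sub (memLp_const θ))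
  have hslice : ∀ᵐ x ∂ν, ∫ y, (φ x y - θ) ∂ν = ∫ y, φ x y ∂ν - θ := by
    filter_upwards [hφ.integrable one_le_two |>.prod_right_ae] with x (hx : Integrable (φ x) ν)
    rw [integral_sub hx (integrable_const θ), integral_const]
    simp
  have hφ₁ : ∫ x, ∫ y, φ x y ∂ν ∂ν = θ := integral_integral (hφ.integrable one_le_two)
  calc cov[fun q : S × S × S => φ q.1 q.2.1, fun q => φ q.1 q.2.2; ν.prod (ν.prod ν)]
      = ∫ q : S × S × S, (φ q.1 q.2.1 - θ) * (φ q.1 q.2.2 - θ) ∂(ν.prod (ν.prod ν)) := by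
        rw [covariance, hmean₁, hmean₂]
    _ = ∫ x, ∫ w : S × S, (φ x w.1 - θ) * (φ x w.2 - θ) ∂(ν.prod ν) ∂ν := integral_prod _ hint
    _ = ∫ x, (∫ y, φ x y ∂ν - θ) ^ 2 ∂ν := by
        refine integral_congr_ae ?_
        filter_upwards [hslice] with x hx
        rw [integral_prod_mul (fun y => φ x y - θ) (fun y => φ x y - θ), hx, sq]
    _ = Var[fun x => ∫ y, φ x y ∂ν; ν] := by
        rw [variance_eq_integral, hφ₁]
        exact (hφm.stronglyMeasurable.integral_prod_right').measurable.aemeasurable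

end ProductKernel

section IIDSample

variable {Ω S ι : Type*} [MeasurableSpace Ω] [MeasurableSpace S] {μ : Measure Ω}
  [IsProbabilityMeasure μ] {ν : Measure S} {X : ι → Ω → S} {φ : S → S → ℝ}

lemma map_prodMk_eq_prod (hXm : ∀ i, Measurable (X i)) (hindep : iIndepFun X μ)
    (hν : ∀ i, μ.map (X i) = ν) {a b : ι} (hab : a ≠ b) :
    μ.map (fun ω => (X a ω, X b ω)) = ν.prod ν := by
  rw [(indepFun_iff_map_prod_eq_prod_map_map (hXm a).aemeasurable (hXm b).aemeasurable).1
    (hindep.indepFun hab), hν, hν]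

lemma map_prodMk_prodMk_eq_prod (hXm : ∀ i, Measurable (X i)) (hindep : iIndepFun X μ)
    (hν : ∀ i, μ.map (X i) = ν) {a b c : ι} (hab : a ≠ b) (hac : a ≠ c) (hbc : b ≠ c) :
    μ.map (fun ω => (X a ω, X b ω, X c ω)) = ν.prod (ν.prod ν) := by
  rw [(indepFun_iff_map_prod_eq_prod_map_map (hXm a).aemeasurable
    ((hXm b).prodMk (hXm c)).aemeasurable).1
    (hindep.indepFun_prodMk hXm b c a hab.symm hac.symm).symm,
    hν, map_prodMk_eq_prod hXm hindep hν hbc]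

lemma memLp_kernel_comp (hφm : Measurable (Function.uncurry φ))
    (hφ : MemLp (Function.uncurry φ) 2 (ν.prod ν)) (hXm : ∀ i, Measurable (X i))
    (hindep : iIndepFun X μ) (hν : ∀ i, μ.map (X i) = ν) {a b : ι} (hab : a ≠ b) :
    MemLp (fun ω => φ (X a ω) (X b ω)) 2 μ := by
  rw [← map_prodMk_eq_prod hXm hindep hν hab] at hφ
  exact (memLp_map_measure_iff hφm.aestronglyMeasurable
    ((hXm a).prodMk (hXm b)).aemeasurable).1 hφ

lemma variance_kernel_comp (hφm : Measurable (Function.uncurry φ)) (hXm : ∀ i, Measurable (X i))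
    (hindep : iIndepFun X μ) (hν : ∀ i, μ.map (X i) = ν) {a b : ι} (hab : a ≠ b) :
    Var[fun ω => φ (X a ω) (X b ω); μ] = Var[Function.uncurry φ; ν.prod ν] := by
  rw [← map_prodMk_eq_prod hXm hindep hν hab,
    variance_map hφm.aemeasurable ((hXm a).prodMk (hXm b)).aemeasurable]
  rfl

lemma covariance_kernel_comp_of_disjoint (hφm : Measurable (Function.uncurry φ))
    (hφ : MemLp (Function.uncurry φ) 2 (ν.prod ν)) (hXm : ∀ i, Measurable (X i))
    (hindep : iIndepFun X μ) (hν : ∀ i, μ.map (X i) = ν) {a b c d : ι} (hab : a ≠ b)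
    (hcd : c ≠ d) (hac : a ≠ c) (had : a ≠ d) (hbc : b ≠ c) (hbd : b ≠ d) :
    cov[fun ω => φ (X a ω) (X b ω), fun ω => φ (X c ω) (X d ω); μ] = 0 :=
  ((hindep.indepFun_prodMk_prodMk hXm a b c d hac had hbc hbd).comp hφm hφm).covariance_eq_zero
    (memLp_kernel_comp hφm hφ hXm hindep hν hab) (memLp_kernel_comp hφm hφ hXm hindep hν hcd)

lemma abs_covariance_kernel_comp_le (hφm : Measurable (Function.uncurry φ))
    (hφ : MemLp (Function.uncurry φ) 2 (ν.prod ν)) (hXm : ∀ i, Measurable (X i))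
    (hindep : iIndepFun X μ) (hν : ∀ i, μ.map (X i) = ν) {a b c d : ι} (hab : a ≠ b)
    (hcd : c ≠ d) :
    |cov[fun ω => φ (X a ω) (X b ω), fun ω => φ (X c ω) (X d ω); μ]|
      ≤ Var[Function.uncurry φ; ν.prod ν] := by
  have h := abs_covariance_le_sqrt (memLp_kernel_comp hφm hφ hXm hindep hν hab)
    (memLp_kernel_comp hφm hφ hXm hindep hν hcd)
  rwa [variance_kernel_comp hφm hXm hindep hν hab, variance_kernel_comp hφm hXm hindep hν hcd,
    Real.sqrt_mul_self (variance_nonneg _ _)] at h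

lemma covariance_kernel_comp_shared (hφm : Measurable (Function.uncurry φ))
    (hφ : MemLp (Function.uncurry φ) 2 (ν.prod ν)) (hXm : ∀ i, Measurable (X i))
    (hindep : iIndepFun X μ) (hν : ∀ i, μ.map (X i) = ν) {a b c : ι} (hab : a ≠ b)
    (hac : a ≠ c) (hbc : b ≠ c) :
    cov[fun ω => φ (X a ω) (X b ω), fun ω => φ (X a ω) (X c ω); μ]
      = Var[fun x => ∫ y, φ x y ∂ν; ν] := by
  have hν₁ : IsProbabilityMeasure ν := hν a ▸ Measure.isProbabilityMeasure_map (hXm a).aemeasurable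
  have h₁ : Measurable fun q : S × S × S => φ q.1 q.2.1 := by fun_prop
  have h₂ : Measurable fun q : S × S × S => φ q.1 q.2.2 := by fun_prop
  rw [← covariance_kernel_shared_eq_variance_integral hφm hφ,
    ← map_prodMk_prodMk_eq_prod hXm hindep hν hab hac hbc,
    covariance_map h₁.aestronglyMeasurable h₂.aestronglyMeasurable
      ((hXm a).prodMk ((hXm b).prodMk (hXm c))).aemeasurable]
  rfl

lemma variance_sum_kernel_comp_le [DecidableEq ι] (hφm : Measurable (Function.uncurry φ))
    (hφ : MemLp (Function.uncurry φ) 2 (ν.prod ν)) (hXm : ∀ i, Measurable (X i))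
    (hindep : iIndepFun X μ) (hν : ∀ i, μ.map (X i) = ν) {A : Finset ι} {P : Finset (ι × ι)}
    (hP : ∀ p ∈ P, p.1 ∈ A ∧ p.2 ∈ A ∧ p.1 ≠ p.2) :
    Var[fun ω => ∑ p ∈ P, φ (X p.1 ω) (X p.2 ω); μ]
      ≤ 4 * #A * #P * Var[Function.uncurry φ; ν.prod ν] := by
  set v := Var[Function.uncurry φ; ν.prod ν]
  have hrow : ∀ p ∈ P, ∑ q ∈ P,
      cov[fun ω => φ (X p.1 ω) (X p.2 ω), fun ω => φ (X q.1 ω) (X q.2 ω); μ] ≤ 4 * #A * v := by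
    intro p hp
    -- only the pairs `q` meeting `p` contribute, and there are at most `4 #A` of them
    set meets : ι × ι → Prop :=
      fun q => q.1 ∈ ({p.1, p.2} : Finset ι) ∨ q.2 ∈ ({p.1, p.2} : Finset ι)
    have hcard : #{q ∈ P | meets q} ≤ 4 * #A := by
      calc #{q ∈ P | meets q} ≤ #(({p.1, p.2} ×ˢ A) ∪ (A ×ˢ {p.1, p.2})) := by
            refine card_le_card fun q hq => ?_
            obtain ⟨hqP, hq⟩ := mem_filter.1 hq
            obtain ⟨hq₁, hq₂, -⟩ := hP q hqP
            rcases hq with h | h <;> simp_all [mem_product]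
        _ ≤ 2 * #A + #A * 2 := by
            grw [card_union_le, card_product, card_product, card_le_two]
        _ = 4 * #A := by ring
    calc ∑ q ∈ P, cov[fun ω => φ (X p.1 ω) (X p.2 ω), fun ω => φ (X q.1 ω) (X q.2 ω); μ]
        = ∑ q ∈ P with meets q,
            cov[fun ω => φ (X p.1 ω) (X p.2 ω), fun ω => φ (X q.1 ω) (X q.2 ω); μ] := by
          refine (sum_filter_of_ne fun q hq hne => ?_).symm
          by_contra hq'
          simp only [meets, mem_insert, mem_singleton, not_or] at hq'
          exact hne (covariance_kernel_comp_of_disjoint hφm hφ hXm hindep hν (hP p hp).2.2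
            (hP q hq).2.2 (Ne.symm hq'.1.1) (Ne.symm hq'.2.1) (Ne.symm hq'.1.2) (Ne.symm hq'.2.2))
      _ ≤ ∑ q ∈ P with meets q, v := sum_le_sum fun q hq => (le_abs_self _).trans
          (abs_covariance_kernel_comp_le hφm hφ hXm hindep hν (hP p hp).2.2
            (hP q (mem_filter.1 hq).1).2.2)
      _ ≤ 4 * #A * v := by
          rw [sum_const, nsmul_eq_mul]
          gcongr
          · exact variance_nonneg _ _
          · exact_mod_cast hcard
  rw [variance_fun_sum' fun p hp => memLp_kernel_comp hφm hφ hXm hindep hν (hP p hp).2.2]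
  calc _ ≤ ∑ _p ∈ P, 4 * #A * v := sum_le_sum hrow
    _ = 4 * #A * #P * v := by rw [sum_const, nsmul_eq_mul]; ring

end IIDSample

lemma U2_eq_sum_pairs {S : Type*} (φ : S → S → ℝ) (n : ℕ) (x : ℕ → S) :
    U2 φ n x = (((n - 1).choose 2 : ℕ) : ℝ)⁻¹ *
      ∑ p ∈ Ico 1 n ×ˢ Ico 1 n with p.1 < p.2, φ (x p.1) (x p.2) := by
  rw [U2, sum_finset_product _ (Ico 1 n) (fun i => Ico (i + 1) n)]
  intro p
  simp only [mem_filter, mem_product, mem_Ico]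
  omega

lemma variance_Bn1 {Ω S : Type*} [MeasurableSpace Ω] {μ : Measure Ω} {φ : S → S → ℝ}
    {x : Ω → ℕ → S} {n : ℕ} (hn : n ≠ 0) :
    (n : ℝ) ^ 2 * Var[fun ω => Bn1 φ n (x ω); μ]
      = Var[fun ω => U12 φ n (x ω) - U2 φ n (x ω); μ] := by
  simp only [Bn1]
  rw [variance_const_mul]
  field_simp

section SingletonStatistic

variable {Ω S : Type*} [MeasurableSpace Ω] [MeasurableSpace S] {μ : Measure Ω}
  [IsProbabilityMeasure μ] {ν : Measure S} {X : ℕ → Ω → S} {φ : S → S → ℝ}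

lemma memLp_U12 (hφm : Measurable (Function.uncurry φ))
    (hφ : MemLp (Function.uncurry φ) 2 (ν.prod ν)) (hXm : ∀ i, Measurable (X i))
    (hindep : iIndepFun X μ) (hν : ∀ i, μ.map (X i) = ν) (n : ℕ) :
    MemLp (fun ω => U12 φ n (fun i => X i ω)) 2 μ := by
  refine (memLp_finsetSum (f := fun j ω => φ (X 0 ω) (X j ω)) _ fun j hj => ?_).const_mul _
  exact memLp_kernel_comp hφm hφ hXm hindep hν (by simp at hj; omega)

lemma memLp_U2 (hφm : Measurable (Function.uncurry φ))
    (hφ : MemLp (Function.uncurry φ) 2 (ν.prod ν)) (hXm : ∀ i, Measurable (X i))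
    (hindep : iIndepFun X μ) (hν : ∀ i, μ.map (X i) = ν) (n : ℕ) :
    MemLp (fun ω => U2 φ n (fun i => X i ω)) 2 μ := by
  refine (memLp_finsetSum (f := fun i ω => ∑ j ∈ Ico (i + 1) n, φ (X i ω) (X j ω)) _
    fun i _ => memLp_finsetSum (f := fun j ω => φ (X i ω) (X j ω)) _ fun j hj => ?_).const_mul _
  exact memLp_kernel_comp hφm hφ hXm hindep hν (by simp at hj; omega)

lemma variance_U12 (hφm : Measurable (Function.uncurry φ))
    (hφ : MemLp (Function.uncurry φ) 2 (ν.prod ν)) (hXm : ∀ i, Measurable (X i))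
    (hindep : iIndepFun X μ) (hν : ∀ i, μ.map (X i) = ν) {n : ℕ} (hn : 2 ≤ n) :
    Var[fun ω => U12 φ n (fun i => X i ω); μ]
      = Var[fun x => ∫ y, φ x y ∂ν; ν]
        + (Var[Function.uncurry φ; ν.prod ν] - Var[fun x => ∫ y, φ x y ∂ν; ν]) / ((n : ℝ) - 1) := by
  set v := Var[Function.uncurry φ; ν.prod ν]
  set σ := Var[fun x => ∫ y, φ x y ∂ν; ν]
  have hne : ∀ j ∈ Ico 1 n, 0 ≠ j := fun j hj => by simp at hj; omega
  have hrow : ∀ j ∈ Ico 1 n, ∑ k ∈ Ico 1 n,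
      cov[fun ω => φ (X 0 ω) (X j ω), fun ω => φ (X 0 ω) (X k ω); μ] = v + ((n : ℝ) - 2) * σ := by
    intro j hj
    rw [← add_sum_erase _ _ hj, covariance_self (by fun_prop),
      variance_kernel_comp hφm hXm hindep hν (hne j hj),
      sum_congr rfl fun k hk => covariance_kernel_comp_shared hφm hφ hXm hindep hν (hne j hj)
        (hne k (mem_of_mem_erase hk)) (ne_of_mem_erase hk).symm,
      sum_const, card_erase_of_mem hj, Nat.card_Ico, nsmul_eq_mul, Nat.sub_sub,
      Nat.cast_sub (by omega : 1 + 1 ≤ n)]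
    push_cast
    ring
  simp only [U12]
  rw [variance_const_mul, variance_fun_sum' fun j hj => memLp_kernel_comp hφm hφ hXm hindep hν
    (hne j hj), sum_congr rfl hrow, sum_const, Nat.card_Ico, nsmul_eq_mul,
    Nat.cast_sub (by omega : 1 ≤ n)]
  have : (n : ℝ) - 1 ≠ 0 := by
    have : (2 : ℝ) ≤ n := by exact_mod_cast hn
    linarith
  field_simp
  ring

lemma variance_U2_le (hφm : Measurable (Function.uncurry φ))
    (hφ : MemLp (Function.uncurry φ) 2 (ν.prod ν)) (hXm : ∀ i, Measurable (X i))
    (hindep : iIndepFun X μ) (hν : ∀ i, μ.map (X i) = ν) {n : ℕ} (hn : 3 ≤ n) :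
    Var[fun ω => U2 φ n (fun i => X i ω); μ]
      ≤ 8 * Var[Function.uncurry φ; ν.prod ν] / ((n : ℝ) - 2) := by
  have hP : ∀ p ∈ {p ∈ Ico 1 n ×ˢ Ico 1 n | p.1 < p.2},
      p.1 ∈ Ico 1 n ∧ p.2 ∈ Ico 1 n ∧ p.1 ≠ p.2 := fun p hp => by
    simp only [mem_filter, mem_product] at hp
    exact ⟨hp.1.1, hp.1.2, hp.2.ne⟩
  have hc : (((n - 1).choose 2 : ℕ) : ℝ) = ((n : ℝ) - 1) * ((n : ℝ) - 2) / 2 := by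
    rw [Nat.cast_choose_two, Nat.cast_sub (by omega : 1 ≤ n)]
    ring
  have hn' : (3 : ℝ) ≤ n := by exact_mod_cast hn
  simp_rw [U2_eq_sum_pairs]
  rw [variance_const_mul]
  grw [variance_sum_kernel_comp_le hφm hφ hXm hindep hν hP]
  rw [card_product_filter_lt, Nat.card_Ico, hc, Nat.cast_sub (by omega : 1 ≤ n)]
  have : (n : ℝ) - 1 ≠ 0 := by linarith
  have : (n : ℝ) - 2 ≠ 0 := by linarith
  refine le_of_eq ?_
  field_simp
  ring

lemma tendsto_variance_U12 (hφm : Measurable (Function.uncurry φ))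
    (hφ : MemLp (Function.uncurry φ) 2 (ν.prod ν)) (hXm : ∀ i, Measurable (X i))
    (hindep : iIndepFun X μ) (hν : ∀ i, μ.map (X i) = ν) :
    Tendsto (fun n => Var[fun ω => U12 φ n (fun i => X i ω); μ]) atTop
      (𝓝 Var[fun x => ∫ y, φ x y ∂ν; ν]) := by
  have h : Tendsto (fun n : ℕ => (n : ℝ) - 1) atTop atTop :=
    tendsto_atTop_add_const_right _ _ tendsto_natCast_atTop_atTop
  have hlim : Tendsto (fun n : ℕ => Var[fun x => ∫ y, φ x y ∂ν; ν]
      + (Var[Function.uncurry φ; ν.prod ν] - Var[fun x => ∫ y, φ x y ∂ν; ν]) / ((n : ℝ) - 1))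
      atTop (𝓝 Var[fun x => ∫ y, φ x y ∂ν; ν]) := by
    simpa using tendsto_const_nhds.add (tendsto_const_nhds.div_atTop h)
  refine hlim.congr' ?_
  filter_upwards [eventually_ge_atTop 2] with n hn
  exact (variance_U12 hφm hφ hXm hindep hν hn).symm

lemma tendsto_variance_U2 (hφm : Measurable (Function.uncurry φ))
    (hφ : MemLp (Function.uncurry φ) 2 (ν.prod ν)) (hXm : ∀ i, Measurable (X i))
    (hindep : iIndepFun X μ) (hν : ∀ i, μ.map (X i) = ν) :
    Tendsto (fun n => Var[fun ω => U2 φ n (fun i => X i ω); μ]) atTop (𝓝 0) := by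
  have h : Tendsto (fun n : ℕ => (n : ℝ) - 2) atTop atTop :=
    tendsto_atTop_add_const_right _ _ tendsto_natCast_atTop_atTop
  have hlim : Tendsto (fun n : ℕ => 8 * Var[Function.uncurry φ; ν.prod ν] / ((n : ℝ) - 2))
      atTop (𝓝 0) := tendsto_const_nhds.div_atTop h
  refine squeeze_zero' (Eventually.of_forall fun n => variance_nonneg _ _) ?_ hlim
  filter_upwards [eventually_ge_atTop 3] with n hn
  exact variance_U2_le hφm hφ hXm hindep hν hn

end SingletonStatistic

theorem nsq_variance_singleton_Bn_tendsto_general {Ω S : Type*} [MeasurableSpace Ω]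
    [mS : MeasurableSpace S] (μ : Measure Ω) [IsProbabilityMeasure μ]
    (φ : S → S → ℝ) (hφm : Measurable (Function.uncurry φ))
    (X : ℕ → Ω → S) (hXm : ∀ i, Measurable (X i))
    (hindep : iIndepFun X μ)
    (hident : ∀ i, IdentDistrib (X i) (X 0) μ μ)
    (hL2 : Integrable (fun ω => (φ (X 0 ω) (X 1 ω)) ^ 2) μ)
    (φ1 : S → ℝ) (hφ1 : ∀ x, φ1 x = ∫ ω, φ x (X 1 ω) ∂μ)
    (σ1sq : ℝ) (hσ1 : σ1sq = variance (fun ω => φ1 (X 0 ω)) μ) :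
    Tendsto (fun n : ℕ => (n : ℝ) ^ 2 * variance (fun ω => Bn1 φ n (fun i => X i ω)) μ)
      atTop (nhds σ1sq) := by
  set ν := μ.map (X 0)
  have hν : ∀ i, μ.map (X i) = ν := fun i => (hident i).map_eq
  have hφ : MemLp (Function.uncurry φ) 2 (ν.prod ν) := by
    rw [← map_prodMk_eq_prod hXm hindep hν zero_ne_one, memLp_map_measure_iff
      hφm.aestronglyMeasurable ((hXm 0).prodMk (hXm 1)).aemeasurable]
    exact (memLp_two_iff_integrable_sq
      (hφm.comp ((hXm 0).prodMk (hXm 1))).aestronglyMeasurable).2 hL2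
  have hφ1ν : φ1 = fun x => ∫ y, φ x y ∂ν := funext fun x => by
    rw [hφ1, ← hν 1, integral_map (hXm 1).aemeasurable (by fun_prop)]
  have hσ : σ1sq = Var[fun x => ∫ y, φ x y ∂ν; ν] := by
    rw [hσ1, hφ1ν]
    exact (variance_map (hφm.stronglyMeasurable.integral_prod_right').aemeasurable
      (hXm 0).aemeasurable).symm
  rw [hσ]
  refine (tendsto_variance_sub_of_tendsto_variance_zero (memLp_U12 hφm hφ hXm hindep hν)
    (memLp_U2 hφm hφ hXm hindep hν) (tendsto_variance_U12 hφm hφ hXm hindep hν)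
    (tendsto_variance_U2 hφm hφ hXm hindep hν)).congr' ?_
  filter_upwards [eventually_ne_atTop 0] with n hn
  exact (variance_Bn1 hn).symm

/-- for an i.i.d. sequence `X 0, X 1, …` with
`E[φ(X₁,X₂)²] < ∞`, the singleton-group statistics satisfy
`n² Var(B_n) → σ₁² = Var(φ₁(X₁))` as `n → ∞`. -/
theorem nsq_variance_singleton_Bn_tendsto {Ω S : Type*} [MeasurableSpace Ω]
    [mS : MeasurableSpace S] (μ : Measure Ω) [IsProbabilityMeasure μ]
    (φ : S → S → ℝ) (hφm : Measurable (Function.uncurry φ))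
    (hφs : ∀ a b, φ a b = φ b a)
    (X : ℕ → Ω → S) (hXm : ∀ i, Measurable (X i))
    (hindep : iIndepFun X μ)
    (hident : ∀ i, IdentDistrib (X i) (X 0) μ μ)
    (hL2 : Integrable (fun ω => (φ (X 0 ω) (X 1 ω)) ^ 2) μ)
    (φ1 : S → ℝ) (hφ1 : ∀ x, φ1 x = ∫ ω, φ x (X 1 ω) ∂μ)
    (σ1sq : ℝ) (hσ1 : σ1sq = variance (fun ω => φ1 (X 0 ω)) μ) :
    Tendsto (fun n : ℕ => (n : ℝ) ^ 2 * variance (fun ω => Bn1 φ n (fun i => X i ω)) μ)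
      atTop (nhds σ1sq) :=
  nsq_variance_singleton_Bn_tendsto_general (mS := mS) μ φ hφm X hXm hindep hident hL2 φ1 hφ1 σ1sq
    hσ1
end

section
/- Let X_1, X_2, … be i.i.d. S-valued random variables with symmetric measurable kernel φ satisfying E[φ(X_1,X_2)^2] < ∞, and let U_n = C(n,2)^{-1} Σ_{1≤i<j≤n} φ(X_i,X_j). Then U_n converges to θ = E[φ(X_1,X_2)] in L^2, and hence in probability, as n → ∞. -/
open MeasureTheory ProbabilityTheory Finset Filter

/-- The combined-sample U-statistic
`U_n = C(n,2)⁻¹ ∑_{0 ≤ i < j ≤ n-1} φ(x i, x j)`. -/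
noncomputable def Ustat {S : Type*} (φ : S → S → ℝ) (n : ℕ) (x : ℕ → S) : ℝ :=
  ((n.choose 2 : ℕ) : ℝ)⁻¹ *
    ∑ i ∈ Finset.range n, ∑ j ∈ Finset.Ico (i + 1) n, φ (x i) (x j)

/-!
Write `h_{ij} = φ(X_i, X_j)`. Each `h_{ij}` with `i ≠ j` has the law of `h_{01}`, so `E U_n = θ` and
`E (U_n - θ)² = Var U_n = C(n,2)⁻² ∑ cov(h_{ij}, h_{kl})` over pairs `i < j`, `k < l`. Pairs without
a common index are independent and contribute `0`; every other covariance is at most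
`Var h_{01}`, and a pair meets at most `4n` pairs. Hence `Var U_n ≤ 4n Var h_{01} / C(n,2)
= 8 Var h_{01} / (n - 1) → 0`, and convergence in probability follows from convergence in `L²`.
-/

section Moments

variable {Ω : Type*} [MeasurableSpace Ω] {μ : Measure Ω}

lemma integral_mul_le_avg_integral_sq {f g : Ω → ℝ} (hf : MemLp f 2 μ) (hg : MemLp g 2 μ) :
    ∫ ω, f ω * g ω ∂μ ≤ (∫ ω, f ω ^ 2 ∂μ + ∫ ω, g ω ^ 2 ∂μ) / 2 := by
  rw [← integral_add hf.integrable_sq hg.integrable_sq, ← integral_div]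
  exact integral_mono (hf.integrable_mul hg) ((hf.integrable_sq.add hg.integrable_sq).div_const 2)
    fun ω => by nlinarith [sq_nonneg (f ω - g ω)]

lemma covariance_le_avg_variance [IsFiniteMeasure μ] {X Y : Ω → ℝ} (hX : MemLp X 2 μ)
    (hY : MemLp Y 2 μ) : cov[X, Y; μ] ≤ (Var[X; μ] + Var[Y; μ]) / 2 := by
  rw [variance_eq_integral hX.aemeasurable, variance_eq_integral hY.aemeasurable]
  exact integral_mul_le_avg_integral_sq (hX.sub (memLp_const _)) (hY.sub (memLp_const _))

lemma variance_sum_le_of_covariance_eq_zero [IsFiniteMeasure μ] {ι : Type*} (s : Finset ι)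
    {Y : ι → Ω → ℝ} (R : ι → ι → Prop) [DecidableRel R] {σ2 : ℝ} {k : ℕ}
    (hY : ∀ p ∈ s, MemLp (Y p) 2 μ) (hvar : ∀ p ∈ s, Var[Y p; μ] ≤ σ2)
    (hcov : ∀ p ∈ s, ∀ q ∈ s, ¬R p q → cov[Y p, Y q; μ] = 0)
    (hk : ∀ p ∈ s, #(s.filter (R p)) ≤ k) :
    Var[fun ω => ∑ p ∈ s, Y p ω; μ] ≤ #s * k * σ2 := by
  rw [variance_fun_sum' hY, mul_assoc, ← nsmul_eq_mul, ← sum_const]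
  refine sum_le_sum fun p hp => ?_
  have hσ2 : 0 ≤ σ2 := (variance_nonneg _ _).trans (hvar p hp)
  rw [← sum_filter_add_sum_filter_not s (R p),
    sum_eq_zero fun q hq => hcov p hp q (mem_filter.1 hq).1 (mem_filter.1 hq).2, add_zero]
  calc ∑ q ∈ s.filter (R p), cov[Y p, Y q; μ] ≤ #(s.filter (R p)) • σ2 :=
        sum_le_card_nsmul _ _ _ fun q hq => by
          have hq := (mem_filter.1 hq).1
          linarith [covariance_le_avg_variance (hY p hp) (hY q hq), hvar p hp, hvar q hq]
    _ ≤ k * σ2 := by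
        rw [nsmul_eq_mul]
        gcongr
        exact_mod_cast hk p hp

lemma tendstoInMeasure_of_tendsto_integral_sq_sub {ι : Type*} {l : Filter ι} {f : ι → Ω → ℝ}
    {g : Ω → ℝ} (hf : ∀ i, MemLp (f i) 2 μ) (hg : MemLp g 2 μ)
    (h : Tendsto (fun i => ∫ ω, (f i ω - g ω) ^ 2 ∂μ) l (nhds 0)) :
    TendstoInMeasure μ f l g := by
  refine tendstoInMeasure_of_tendsto_eLpNorm two_ne_zero (fun i => (hf i).1) hg.1 ?_
  have hnorm : ∀ i, eLpNorm (f i - g) 2 μ = ENNReal.ofReal (√(∫ ω, (f i ω - g ω) ^ 2 ∂μ)) := by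
    intro i
    rw [((hf i).sub hg).eLpNorm_eq_integral_rpow_norm two_ne_zero ENNReal.ofNat_ne_top,
      Real.sqrt_eq_rpow]
    simp [Real.norm_eq_abs]
  simp_rw [hnorm]
  simpa [Function.comp_def] using
    (ENNReal.continuous_ofReal.tendsto _).comp ((Real.continuous_sqrt.tendsto 0).comp h)

end Moments

def ltPairs (n : ℕ) : Finset (ℕ × ℕ) := (range n ×ˢ range n).filter fun p => p.1 < p.2

lemma sum_ltPairs {M : Type*} [AddCommMonoid M] (n : ℕ) (f : ℕ → ℕ → M) :
    ∑ p ∈ ltPairs n, f p.1 p.2 = ∑ i ∈ range n, ∑ j ∈ Ico (i + 1) n, f i j := by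
  rw [ltPairs, sum_filter, sum_product]
  refine sum_congr rfl fun i _ => ?_
  rw [← sum_filter]
  congr 1
  ext j
  simp only [mem_filter, mem_range, mem_Ico]
  omega

lemma card_ltPairs (n : ℕ) : #(ltPairs n) = n.choose 2 := by
  rw [card_eq_sum_ones, sum_ltPairs n fun _ _ => 1, Nat.choose_two_right, ← sum_range_id,
    ← sum_range_reflect (fun i => i) n]
  refine sum_congr rfl fun i _ => ?_
  simp only [sum_const, Nat.card_Ico, smul_eq_mul, mul_one]
  omega

lemma card_ltPairs_filter_meets_le (n : ℕ) (t : Finset ℕ) :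
    #((ltPairs n).filter fun q => q.1 ∈ t ∨ q.2 ∈ t) ≤ 2 * #t * n := by
  have hsub : (ltPairs n).filter (fun q => q.1 ∈ t ∨ q.2 ∈ t) ⊆ t ×ˢ range n ∪ range n ×ˢ t := by
    intro q hq
    simp only [ltPairs, mem_filter, mem_product, mem_union] at hq ⊢
    tauto
  calc _ ≤ #(t ×ˢ range n ∪ range n ×ˢ t) := card_le_card hsub
    _ ≤ 2 * #t * n := by
        grw [card_union_le]
        simp only [card_product, card_range]
        linarith

lemma ProbabilityTheory.iIndepFun.identDistrib_prodMk {Ω ι S : Type*} [MeasurableSpace Ω]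
    [MeasurableSpace S] {μ : Measure Ω} [IsProbabilityMeasure μ] {X : ι → Ω → S}
    (hindep : iIndepFun X μ) {i₀ : ι} (hident : ∀ i, IdentDistrib (X i) (X i₀) μ μ) {i j k l : ι}
    (hij : i ≠ j) (hkl : k ≠ l) :
    IdentDistrib (fun ω => (X i ω, X j ω)) (fun ω => (X k ω, X l ω)) μ μ := by
  have hX : ∀ i, AEMeasurable (X i) μ := fun i => (hident i).aemeasurable_fst
  have hmap : ∀ i, μ.map (X i) = μ.map (X i₀) := fun i => (hident i).map_eq
  refine ⟨(hX i).prodMk (hX j), (hX k).prodMk (hX l), ?_⟩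
  rw [(hindep.indepFun hij).map_prod_eq_prod_map_map (hX i) (hX j),
    (hindep.indepFun hkl).map_prod_eq_prod_map_map (hX k) (hX l), hmap i, hmap j, hmap k, hmap l]

lemma Ustat_eq_sum_ltPairs {S : Type*} (φ : S → S → ℝ) (n : ℕ) (x : ℕ → S) :
    Ustat φ n x = ((n.choose 2 : ℕ) : ℝ)⁻¹ * ∑ p ∈ ltPairs n, φ (x p.1) (x p.2) := by
  rw [Ustat, sum_ltPairs n fun i j => φ (x i) (x j)]

section Ustat

variable {Ω S : Type*} [MeasurableSpace Ω] [MeasurableSpace S] {μ : Measure Ω}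
  [IsProbabilityMeasure μ] {φ : S → S → ℝ} {X : ℕ → Ω → S}

lemma identDistrib_kernel_comp_prodMk (hφm : Measurable (Function.uncurry φ))
    (hindep : iIndepFun X μ) (hident : ∀ i, IdentDistrib (X i) (X 0) μ μ) {i j : ℕ}
    (hij : i ≠ j) :
    IdentDistrib (fun ω => φ (X i ω) (X j ω)) (fun ω => φ (X 0 ω) (X 1 ω)) μ μ :=
  (hindep.identDistrib_prodMk hident hij zero_ne_one).comp (u := Function.uncurry φ) hφm

lemma memLp_Ustat (hφm : Measurable (Function.uncurry φ)) (hindep : iIndepFun X μ)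
    (hident : ∀ i, IdentDistrib (X i) (X 0) μ μ) (hL2 : MemLp (fun ω => φ (X 0 ω) (X 1 ω)) 2 μ)
    (n : ℕ) : MemLp (fun ω => Ustat φ n fun i => X i ω) 2 μ := by
  simp_rw [Ustat_eq_sum_ltPairs]
  refine MemLp.const_mul (memLp_finsetSum (f := fun (p : ℕ × ℕ) ω => φ (X p.1 ω) (X p.2 ω)) _
    fun p hp => ?_) _
  exact (identDistrib_kernel_comp_prodMk hφm hindep hident
    (mem_filter.1 hp).2.ne).memLp_iff.2 hL2

lemma integral_Ustat (hφm : Measurable (Function.uncurry φ)) (hindep : iIndepFun X μ)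
    (hident : ∀ i, IdentDistrib (X i) (X 0) μ μ)
    (hint : Integrable (fun ω => φ (X 0 ω) (X 1 ω)) μ) {n : ℕ} (hn : 2 ≤ n) :
    ∫ ω, Ustat φ n (fun i => X i ω) ∂μ = ∫ ω, φ (X 0 ω) (X 1 ω) ∂μ := by
  have hpair : ∀ p ∈ ltPairs n,
      IdentDistrib (fun ω => φ (X p.1 ω) (X p.2 ω)) (fun ω => φ (X 0 ω) (X 1 ω)) μ μ :=
    fun p hp => identDistrib_kernel_comp_prodMk hφm hindep hident (mem_filter.1 hp).2.ne
  have hC : ((n.choose 2 : ℕ) : ℝ) ≠ 0 := Nat.cast_ne_zero.2 (Nat.choose_pos hn).ne'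
  simp_rw [Ustat_eq_sum_ltPairs]
  rw [integral_const_mul, integral_finsetSum _ fun p hp => (hpair p hp).integrable_iff.2 hint,
    sum_congr rfl fun p hp => (hpair p hp).integral_eq, sum_const, card_ltPairs, nsmul_eq_mul,
    inv_mul_cancel_left₀ hC]

lemma variance_Ustat_le (hφm : Measurable (Function.uncurry φ)) (hindep : iIndepFun X μ)
    (hident : ∀ i, IdentDistrib (X i) (X 0) μ μ) (hL2 : MemLp (fun ω => φ (X 0 ω) (X 1 ω)) 2 μ)
    {n : ℕ} (hn : 2 ≤ n) :
    Var[fun ω => Ustat φ n fun i => X i ω; μ] ≤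
      8 * Var[fun ω => φ (X 0 ω) (X 1 ω); μ] / (n - 1) := by
  set σ2 := Var[fun ω => φ (X 0 ω) (X 1 ω); μ]
  have hpair : ∀ p ∈ ltPairs n,
      IdentDistrib (fun ω => φ (X p.1 ω) (X p.2 ω)) (fun ω => φ (X 0 ω) (X 1 ω)) μ μ :=
    fun p hp => identDistrib_kernel_comp_prodMk hφm hindep hident (mem_filter.1 hp).2.ne
  have hY : ∀ p ∈ ltPairs n, MemLp (fun ω => φ (X p.1 ω) (X p.2 ω)) 2 μ :=
    fun p hp => (hpair p hp).memLp_iff.2 hL2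
  have hcov : ∀ p ∈ ltPairs n, ∀ q ∈ ltPairs n,
      ¬(q.1 ∈ ({p.1, p.2} : Finset ℕ) ∨ q.2 ∈ ({p.1, p.2} : Finset ℕ)) →
      cov[fun ω => φ (X p.1 ω) (X p.2 ω), fun ω => φ (X q.1 ω) (X q.2 ω); μ] = 0 := by
    intro p hp q hq hpq
    simp only [mem_insert, mem_singleton, not_or] at hpq
    obtain ⟨⟨hk1, hk2⟩, hl1, hl2⟩ := hpq
    have hindep_pq := (hindep.indepFun_prodMk_prodMk₀ (fun i => (hident i).aemeasurable_fst)
      p.1 p.2 q.1 q.2 (Ne.symm hk1) (Ne.symm hl1) (Ne.symm hk2) (Ne.symm hl2)).comp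
      (φ := Function.uncurry φ) (ψ := Function.uncurry φ) hφm hφm
    exact hindep_pq.covariance_eq_zero (hY p hp) (hY q hq)
  have hsum := variance_sum_le_of_covariance_eq_zero (ltPairs n)
    (fun p q => q.1 ∈ ({p.1, p.2} : Finset ℕ) ∨ q.2 ∈ ({p.1, p.2} : Finset ℕ)) (k := 4 * n)
    hY (fun p hp => (hpair p hp).variance_eq.le) hcov
    fun p _ => (card_ltPairs_filter_meets_le n _).trans (by grw [card_le_two])
  have hn' : (2 : ℝ) ≤ n := by exact_mod_cast hn
  simp_rw [Ustat_eq_sum_ltPairs]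
  rw [variance_const_mul]
  calc _ ≤ (((n.choose 2 : ℕ) : ℝ)⁻¹) ^ 2 * (#(ltPairs n) * ((4 * n : ℕ) : ℝ) * σ2) :=
        mul_le_mul_of_nonneg_left hsum (by positivity)
    _ = 8 * σ2 / (n - 1) := by
        rw [card_ltPairs, Nat.cast_choose_two]
        field_simp
        push_cast
        ring

end Ustat

theorem combined_Ustat_L2_and_in_probability_general {Ω S : Type*} [MeasurableSpace Ω]
    [mS : MeasurableSpace S] (μ : Measure Ω) [IsProbabilityMeasure μ]
    (φ : S → S → ℝ) (hφm : Measurable (Function.uncurry φ))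
    (X : ℕ → Ω → S)
    (hindep : iIndepFun (m := fun _ : ℕ => mS) X μ)
    (hident : ∀ i, IdentDistrib (X i) (X 0) μ μ)
    (hL2 : Integrable (fun ω => (φ (X 0 ω) (X 1 ω)) ^ 2) μ)
    (θ : ℝ) (hθ : θ = ∫ ω, φ (X 0 ω) (X 1 ω) ∂μ) :
    Tendsto (fun n : ℕ => ∫ ω, (Ustat φ n (fun i => X i ω) - θ) ^ 2 ∂μ)
        atTop (nhds 0) ∧
      TendstoInMeasure μ (fun n : ℕ => fun ω => Ustat φ n (fun i => X i ω))
        atTop (fun _ => θ) := by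
  have hφL2 : MemLp (fun ω => φ (X 0 ω) (X 1 ω)) 2 μ :=
    (memLp_two_iff_integrable_sq (hφm.comp_aemeasurable
      ((hident 0).aemeasurable_fst.prodMk (hident 1).aemeasurable_fst)).aestronglyMeasurable).2 hL2
  have hU := memLp_Ustat hφm hindep hident hφL2
  have hmoment : ∀ n, 2 ≤ n → ∫ ω, (Ustat φ n (fun i => X i ω) - θ) ^ 2 ∂μ ≤
      8 * Var[fun ω => φ (X 0 ω) (X 1 ω); μ] / (n - 1) := fun n hn => by
    rw [hθ, ← integral_Ustat hφm hindep hident (hφL2.integrable one_le_two) hn,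
      ← variance_eq_integral (hU n).aemeasurable]
    exact variance_Ustat_le hφm hindep hident hφL2 hn
  have hbound : Tendsto (fun n : ℕ => 8 * Var[fun ω => φ (X 0 ω) (X 1 ω); μ] / (n - 1))
      atTop (nhds 0) :=
    tendsto_const_nhds.div_atTop (tendsto_atTop_add_const_right _ (-1) tendsto_natCast_atTop_atTop)
  have hL2conv := squeeze_zero' (Eventually.of_forall fun n => integral_nonneg fun ω => sq_nonneg _)
    ((eventually_ge_atTop 2).mono hmoment) hbound
  exact ⟨hL2conv, tendstoInMeasure_of_tendsto_integral_sq_sub hU (memLp_const θ) hL2conv⟩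

/-- for an i.i.d. sequence `X 0, X 1, …` with
`E[φ(X₁,X₂)²] < ∞`, the combined-sample U-statistics `U_n` converge to
`θ = E[φ(X₁,X₂)]` in `L²`, and hence in probability (in measure), as `n → ∞`. -/
theorem combined_Ustat_L2_and_in_probability {Ω S : Type*} [MeasurableSpace Ω]
    [mS : MeasurableSpace S] (μ : Measure Ω) [IsProbabilityMeasure μ]
    (φ : S → S → ℝ) (hφm : Measurable (Function.uncurry φ))
    (hφs : ∀ a b, φ a b = φ b a)
    (X : ℕ → Ω → S) (hXm : ∀ i, Measurable (X i))
    (hindep : iIndepFun (m := fun _ : ℕ => mS) X μ)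
    (hident : ∀ i, IdentDistrib (X i) (X 0) μ μ)
    (hL2 : Integrable (fun ω => (φ (X 0 ω) (X 1 ω)) ^ 2) μ)
    (θ : ℝ) (hθ : θ = ∫ ω, φ (X 0 ω) (X 1 ω) ∂μ) :
    Tendsto (fun n : ℕ => ∫ ω, (Ustat φ n (fun i => X i ω) - θ) ^ 2 ∂μ)
        atTop (nhds 0) ∧
      TendstoInMeasure μ (fun n : ℕ => fun ω => Ustat φ n (fun i => X i ω))
        atTop (fun _ => θ) :=
  combined_Ustat_L2_and_in_probability_general (mS := mS) μ φ hφm X hindep hident hL2 θ hθ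
end
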